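/- arXiv:1303.0540 — 5 statements merged into one kernel-verified Lean document; each statement's English description precedes it below -/
import Mathlib

section
/- If every x in (0,1] satisfies x > 1 - exp(-αKx^{K-1}) (i.e., α is below the peeling threshold of the uncoupled system), then the ring fixed point equations x_z = 1 - (1/w)∑_{l=0}^{w-1} exp(-αK((1/w)∑_{k=0}^{w-1} x_{(z+k-l) mod L})^{K-1}) have only the all-zero solution in [0,1]^L. -/
open Real Finset

theorem stmt5 (α : ℝ) (K w L : ℕ) (hα : 0 < α) (hK : 2 ≤ K) (hw : 1 ≤ w) (hwL : w ≤ L)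
    (hbelow : ∀ x : ℝ, 0 < x → x ≤ 1 → 1 - Real.exp (-(α * K * x ^ (K - 1))) < x) :
    ∀ y : ZMod L → ℝ, (∀ z, y z ∈ Set.Icc (0 : ℝ) 1) →
      (∀ z : ZMod L, y z =
        1 - (1 / (w : ℝ)) * ∑ l ∈ Finset.range w,
          Real.exp (-(α * K * ((1 / (w : ℝ)) *
            ∑ k ∈ Finset.range w, y (z + (k : ZMod L) - (l : ZMod L))) ^ (K - 1)))) →
      ∀ z, y z = 0 := by
  intro y hy hfix
  haveI : NeZero L := ⟨by omega⟩
  have hw0 : (0:ℝ) < (w : ℝ) := by exact_mod_cast hw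
  obtain ⟨z0, hz0⟩ := Finite.exists_max y
  set M := y z0 with hM
  have hM1 : M ≤ 1 := (hy z0).2
  have hM0 : 0 ≤ M := (hy z0).1
  have hMle : M ≤ 0 := by
    by_contra h
    have hMpos : 0 < M := lt_of_not_ge h
    have key : ∀ l ∈ Finset.range w,
        Real.exp (-(α * K * M ^ (K-1))) ≤ Real.exp (-(α * K * ((1/(w:ℝ)) *
          ∑ k ∈ Finset.range w, y (z0 + (k : ZMod L) - (l : ZMod L))) ^ (K-1))) := by
      intro l _
      apply Real.exp_le_exp.mpr
      apply neg_le_neg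
      apply mul_le_mul_of_nonneg_left _ (by positivity)
      have hA0 : 0 ≤ (1/(w:ℝ)) * ∑ k ∈ Finset.range w, y (z0 + (k : ZMod L) - (l : ZMod L)) := by
        apply mul_nonneg (by positivity)
        exact Finset.sum_nonneg fun k _ => (hy _).1
      have hsum : ∑ k ∈ Finset.range w, y (z0 + (k : ZMod L) - (l : ZMod L)) ≤ (w : ℝ) * M := by
        calc ∑ k ∈ Finset.range w, y (z0 + (k : ZMod L) - (l : ZMod L))
            ≤ ∑ _k ∈ Finset.range w, M := Finset.sum_le_sum fun k _ => hz0 _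
          _ = (w : ℝ) * M := by simp [mul_comm]
      have hAM : (1/(w:ℝ)) * ∑ k ∈ Finset.range w, y (z0 + (k : ZMod L) - (l : ZMod L)) ≤ M := by
        calc (1/(w:ℝ)) * ∑ k ∈ Finset.range w, y (z0 + (k : ZMod L) - (l : ZMod L))
            ≤ (1/(w:ℝ)) * ((w:ℝ) * M) := by
              apply mul_le_mul_of_nonneg_left hsum (by positivity)
          _ = M := by field_simp
      exact pow_le_pow_left₀ hA0 hAM _
    have hsumexp : (w : ℝ) * Real.exp (-(α * K * M ^ (K-1))) ≤
        ∑ l ∈ Finset.range w, Real.exp (-(α * K * ((1/(w:ℝ)) *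
          ∑ k ∈ Finset.range w, y (z0 + (k : ZMod L) - (l : ZMod L))) ^ (K-1))) := by
      calc (w : ℝ) * Real.exp (-(α * K * M ^ (K-1)))
          = ∑ _l ∈ Finset.range w, Real.exp (-(α * K * M ^ (K-1))) := by simp [mul_comm]
        _ ≤ _ := Finset.sum_le_sum key
    have hle : M ≤ 1 - Real.exp (-(α * K * M ^ (K-1))) := by
      have heq := hfix z0
      have : Real.exp (-(α * K * M ^ (K-1))) ≤ (1/(w:ℝ)) * ∑ l ∈ Finset.range w,
          Real.exp (-(α * K * ((1/(w:ℝ)) *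
            ∑ k ∈ Finset.range w, y (z0 + (k : ZMod L) - (l : ZMod L))) ^ (K-1))) := by
        calc Real.exp (-(α * K * M ^ (K-1)))
            = (1/(w:ℝ)) * ((w:ℝ) * Real.exp (-(α * K * M ^ (K-1)))) := by field_simp
          _ ≤ _ := by apply mul_le_mul_of_nonneg_left hsumexp (by positivity)
      linarith [heq]
    have := hbelow M hMpos hM1
    linarith
  intro z
  have h1 : y z ≤ M := hz0 z
  have h2 : 0 ≤ y z := (hy z).1
  linarith
end

section
/- Any nonnegative solution (x_0,...,x_{L-1}) of the coupled fixed point equations with open boundary (x_z = 0 for z < 0 or z ≥ L) is dominated coordinatewise by the constant vector whose value is the largest fixed point x* of x = 1 - exp(-αKx^{K-1}) in [0,1]; that is, x_z ≤ x* for all z. -/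
open Real Finset

theorem stmt6 (α : ℝ) (K w L : ℕ) (hα : 0 < α) (hK : 2 ≤ K) (hw : 1 ≤ w) (hL : 1 ≤ L)
    (xstar : ℝ) (hxs : xstar ∈ Set.Icc (0 : ℝ) 1)
    (hfix : xstar = 1 - Real.exp (-(α * K * xstar ^ (K - 1))))
    (hmax : ∀ y ∈ Set.Icc (0 : ℝ) 1, y = 1 - Real.exp (-(α * K * y ^ (K - 1))) → y ≤ xstar)
    (x : ℤ → ℝ) (hnn : ∀ z, 0 ≤ x z)
    (hbd : ∀ z : ℤ, z < 0 ∨ (L : ℤ) ≤ z → x z = 0)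
    (hfp : ∀ z : ℤ, 0 ≤ z → z < (L : ℤ) →
      x z = 1 - (1 / (w : ℝ)) * ∑ l ∈ Finset.range w,
        Real.exp (-(α * K * ((1 / (w : ℝ)) * ∑ k ∈ Finset.range w, x (z + k - l)) ^ (K - 1)))) :
    ∀ z : ℤ, x z ≤ xstar := by
  have hw0 : (0:ℝ) < (w:ℝ) := by exact_mod_cast Nat.lt_of_lt_of_le Nat.zero_lt_one hw
  set g : ℝ → ℝ := fun t => 1 - Real.exp (-(α * K * t ^ (K - 1))) with hgdef
  have hαK : (0:ℝ) ≤ α * K := by positivity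
  have gmono : ∀ a b : ℝ, 0 ≤ a → a ≤ b → g a ≤ g b := by
    intro a b ha hab
    have h1 : a ^ (K-1) ≤ b ^ (K-1) := pow_le_pow_left₀ ha hab _
    have h2 : α * K * a ^ (K-1) ≤ α * K * b ^ (K-1) :=
      mul_le_mul_of_nonneg_left h1 hαK
    have h3 := Real.exp_le_exp.mpr (neg_le_neg h2)
    simp only [hgdef]
    linarith
  have hL1 : (1:ℤ) ≤ (L:ℤ) := by exact_mod_cast hL
  have h0T : (0:ℤ) ∈ Finset.Icc (0:ℤ) ((L:ℤ)-1) := by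
    simp only [Finset.mem_Icc]; omega
  have hTne : (Finset.Icc (0:ℤ) ((L:ℤ)-1)).Nonempty := ⟨0, h0T⟩
  set M := (Finset.Icc (0:ℤ) ((L:ℤ)-1)).sup' hTne x with hMdef
  have hM0 : 0 ≤ M := le_trans (hnn 0) (Finset.le_sup' x h0T)
  have hMub : ∀ z : ℤ, x z ≤ M := by
    intro z
    by_cases h : z ∈ Finset.Icc (0:ℤ) ((L:ℤ)-1)
    · exact Finset.le_sup' x h
    · rw [hbd z (by simp only [Finset.mem_Icc] at h; omega)]
      exact hM0
  have key : ∀ z : ℤ, 0 ≤ z → z < (L:ℤ) → x z ≤ g M := by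
    intro z h0 h1
    rw [hfp z h0 h1]
    have hE : ∀ l ∈ Finset.range w,
        Real.exp (-(α * K * M ^ (K-1))) ≤
        Real.exp (-(α * K * ((1/(w:ℝ)) * ∑ k ∈ Finset.range w, x (z + k - l)) ^ (K-1))) := by
      intro l _
      apply Real.exp_le_exp.mpr
      apply neg_le_neg
      apply mul_le_mul_of_nonneg_left _ hαK
      apply pow_le_pow_left₀
      · exact mul_nonneg (by positivity) (Finset.sum_nonneg fun k _ => hnn _)
      · have hs : ∑ k ∈ Finset.range w, x (z + k - l) ≤ (w:ℝ) * M := by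
          calc ∑ k ∈ Finset.range w, x (z + k - l) ≤ ∑ _k ∈ Finset.range w, M :=
                Finset.sum_le_sum (fun k _ => hMub _)
            _ = (w:ℝ) * M := by simp [Finset.sum_const, mul_comm]
        rw [one_div, inv_mul_le_iff₀ hw0]
        exact hs
    have hsum : (w:ℝ) * Real.exp (-(α * K * M ^ (K-1))) ≤
        ∑ l ∈ Finset.range w,
          Real.exp (-(α * K * ((1/(w:ℝ)) * ∑ k ∈ Finset.range w, x (z + k - l)) ^ (K-1))) := by
      have := Finset.card_nsmul_le_sum (Finset.range w) _ _ hE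
      simpa [nsmul_eq_mul, one_div] using this
    have hinv : Real.exp (-(α * K * M ^ (K-1))) ≤
        (1/(w:ℝ)) * ∑ l ∈ Finset.range w,
          Real.exp (-(α * K * ((1/(w:ℝ)) * ∑ k ∈ Finset.range w, x (z + k - l)) ^ (K-1))) := by
      have h2 := mul_le_mul_of_nonneg_left hsum (le_of_lt (one_div_pos.mpr hw0))
      calc Real.exp (-(α * K * M ^ (K-1)))
          = (1/(w:ℝ)) * ((w:ℝ) * Real.exp (-(α * K * M ^ (K-1)))) := by field_simp
        _ ≤ _ := h2
    simp only [hgdef]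
    linarith
  obtain ⟨z0, hz0, hMeq⟩ := Finset.exists_mem_eq_sup' hTne x
  have hz0' : 0 ≤ z0 ∧ z0 ≤ (L:ℤ) - 1 := Finset.mem_Icc.mp hz0
  have hMgM : M ≤ g M := by
    have h := key z0 hz0'.1 (by omega)
    calc M = x z0 := by rw [hMdef, hMeq]
      _ ≤ g M := h
  have hM1 : M ≤ 1 := by
    have := Real.exp_pos (-(α * K * M ^ (K-1)))
    simp only [hgdef] at hMgM
    linarith
  set S : Set ℝ := {t | t ∈ Set.Icc (0:ℝ) 1 ∧ t ≤ g t} with hSdef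
  have hMS : M ∈ S := ⟨⟨hM0, hM1⟩, hMgM⟩
  have hbdd : BddAbove S := ⟨1, fun t ht => ht.1.2⟩
  set y := sSup S with hydef
  have hMy : M ≤ y := le_csSup hbdd hMS
  have hy0 : 0 ≤ y := hM0.trans hMy
  have hy1 : y ≤ 1 := csSup_le ⟨M, hMS⟩ (fun t ht => ht.1.2)
  have hyg : y ≤ g y :=
    csSup_le ⟨M, hMS⟩ (fun t ht => ht.2.trans (gmono t y ht.1.1 (le_csSup hbdd ht)))
  have hgy0 : 0 ≤ g y := by
    have h1 : Real.exp (-(α * K * y ^ (K-1))) ≤ 1 := by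
      apply Real.exp_le_one_iff.mpr
      have : (0:ℝ) ≤ α * K * y ^ (K-1) := by positivity
      linarith
    simp only [hgdef]
    linarith
  have hgy1 : g y ≤ 1 := by
    have := Real.exp_pos (-(α * K * y ^ (K-1)))
    simp only [hgdef]
    linarith
  have hgyS : g y ∈ S := ⟨⟨hgy0, hgy1⟩, gmono y (g y) hy0 hyg⟩
  have hgyy : g y ≤ y := le_csSup hbdd hgyS
  have hfpy : y = g y := le_antisymm hyg hgyy
  have hyx : y ≤ xstar := hmax y ⟨hy0, hy1⟩ hfpy
  intro z
  exact (hMub z).trans (hMy.trans hyx)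
end

section
/- Let G = (V ∪ C, E) be a finite bipartite graph (variables V, clauses C) on which the peeling algorithm terminates with the empty graph (i.e., G has empty 2-core). Then the GF(2) matrix H ∈ GF(2)^{C×V} with H_{c,v} = 1 iff c is adjacent to v has full row rank |C|; consequently, for every b ∈ GF(2)^C the system Hx = b has exactly 2^{|V|-|C|} solutions. -/
open Matrix

theorem stmt11 {V C : Type} [Fintype V] [Fintype C] [DecidableEq V] [DecidableEq C]
    (N : C → Finset V)
    (hcore : ∀ (A : Finset V) (B : Finset C), (∀ c ∈ B, N c ⊆ A) →
      (∀ v ∈ A, 2 ≤ (B.filter (fun c => v ∈ N c)).card) → A = ∅ ∧ B = ∅)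
    (H : Matrix C V (ZMod 2)) (hH : ∀ c v, H c v = if v ∈ N c then 1 else 0) :
    H.rank = Fintype.card C ∧
    ∀ b : C → ZMod 2,
      Nat.card {x : V → ZMod 2 | H.mulVec x = b} = 2 ^ (Fintype.card V - Fintype.card C) := by
  classical
  have h2 : ∀ x : ZMod 2, x = 0 ∨ x = 1 := by decide
  -- Key: the transpose map is injective
  have hinj : Function.Injective Hᵀ.mulVecLin := by
    rw [← LinearMap.ker_eq_bot, LinearMap.ker_eq_bot']
    intro y hy
    set B : Finset C := Finset.univ.filter (fun c => y c ≠ 0) with hB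
    set A : Finset V := B.biUnion N with hA
    have hcard : ∀ v : V, (2 : ℕ) ∣ (B.filter (fun c => v ∈ N c)).card := by
      intro v
      have h0 : Hᵀ.mulVecLin y v = 0 := by rw [hy]; rfl
      have hsum : (∑ c, H c v * y c) = 0 := h0
      have heq : ∀ c : C, H c v * y c =
          if c ∈ B.filter (fun c => v ∈ N c) then (1 : ZMod 2) else 0 := by
        intro c
        rw [hH]
        rcases h2 (y c) with hyc | hyc <;>
          simp [hyc, hB, Finset.mem_filter]
      rw [Finset.sum_congr rfl (fun c _ => heq c), Finset.sum_ite_mem, Finset.univ_inter,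
        Finset.sum_const, nsmul_eq_mul, mul_one] at hsum
      exact (ZMod.natCast_eq_zero_iff _ 2).mp hsum
    have hBempty : B = ∅ := by
      refine (hcore A B (fun c hc => Finset.subset_biUnion_of_mem N hc) ?_).2
      intro v hv
      rcases Finset.mem_biUnion.mp hv with ⟨c, hc, hvc⟩
      have hne : (B.filter (fun c => v ∈ N c)).Nonempty := ⟨c, Finset.mem_filter.mpr ⟨hc, hvc⟩⟩
      have h1 : 1 ≤ (B.filter (fun c => v ∈ N c)).card := Finset.card_pos.mpr hne
      obtain ⟨k, hk⟩ := hcard v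
      omega
    funext c
    by_contra hc
    have : c ∈ B := Finset.mem_filter.mpr ⟨Finset.mem_univ c, hc⟩
    rw [hBempty] at this
    exact absurd this (Finset.notMem_empty c)
  -- rank computation
  have hrankT : Hᵀ.rank = Fintype.card C := by
    rw [Matrix.rank, LinearMap.finrank_range_of_inj hinj,
      Module.finrank_fintype_fun_eq_card]
  have hrank : H.rank = Fintype.card C := by rw [← Matrix.rank_transpose, hrankT]
  refine ⟨hrank, fun b => ?_⟩
  -- surjectivity
  have hsurj : Function.Surjective H.mulVecLin := by
    rw [← LinearMap.range_eq_top]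
    apply Submodule.eq_top_of_finrank_eq
    rw [← Matrix.rank, hrank, Module.finrank_fintype_fun_eq_card]
  obtain ⟨x0, hx0⟩ := hsurj b
  -- bijection with the kernel
  have e : {x : V → ZMod 2 | H.mulVec x = b} ≃ LinearMap.ker H.mulVecLin :=
    { toFun := fun x => ⟨x.1 - x0, by
        have hx : H.mulVecLin x.1 = b := x.2
        simp [LinearMap.mem_ker, map_sub, hx, hx0]⟩
      invFun := fun y => ⟨y.1 + x0, by
        have hy : H.mulVecLin y.1 = 0 := y.2
        show H.mulVecLin (y.1 + x0) = b
        simp [map_add, hy, hx0]⟩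
      left_inv := fun x => by simp
      right_inv := fun y => by simp }
  rw [Nat.card_congr e]
  -- kernel cardinality
  have hker : Module.finrank (ZMod 2) (LinearMap.ker H.mulVecLin) =
      Fintype.card V - Fintype.card C := by
    have := LinearMap.finrank_range_add_finrank_ker H.mulVecLin
    rw [← Matrix.rank, hrank, Module.finrank_fintype_fun_eq_card] at this
    omega
  haveI : Fintype (LinearMap.ker H.mulVecLin) := Fintype.ofFinite _
  rw [Nat.card_eq_fintype_card, Module.card_eq_pow_finrank (K := ZMod 2), hker, ZMod.card]
end

section
/- Let H ∈ GF(2)^{m×n} be the biadjacency matrix of a bipartite graph G with empty 2-core, and let T = T(G) be the number of rounds of synchronous peeling needed to empty G. Then ker(H) admits a basis y_1,...,y_{n-m} such that for each basis vector y_j there is a variable i_j with: y_j is supported on variables at graph distance at most T from i_j in G. In particular, every basis vector has Hamming weight at most max_{i∈V} |B_G(i,T)|, where B_G(i,T) is the set of variables at distance ≤ T from i. -/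
noncomputable def solveAux {V C : Type} [DecidableEq V] (N : C → Finset V)
    (M : V → Option C) (rk : V → ℕ) (i : V) (v : V) : ZMod 2 :=
  match M v with
  | none => if v = i then 1 else 0
  | some c => ∑ w ∈ (N c).erase v, if h : rk w < rk v then solveAux N M rk i w else 0
termination_by rk v
decreasing_by exact h

theorem stmt12 {V C : Type} [Fintype V] [Fintype C] [DecidableEq V] [DecidableEq C]
    (N : C → Finset V)
    (J : ℕ → Finset V × Finset C)
    (hJ0 : J 0 = (Finset.univ, Finset.univ))
    (hstep1 : ∀ t v, v ∈ (J (t + 1)).1 ↔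
      v ∈ (J t).1 ∧ 2 ≤ ((J t).2.filter (fun c => v ∈ N c)).card)
    (hstep2 : ∀ t c, c ∈ (J (t + 1)).2 ↔
      c ∈ (J t).2 ∧ ¬ ∃ v ∈ (J t).1, ((J t).2.filter (fun c' => v ∈ N c')).card ≤ 1 ∧ v ∈ N c)
    (T : ℕ) (hT : J T = (∅, ∅))
    (dG : V → V → ℕ)
    (hd0 : ∀ i, dG i i = 0)
    (hdstep : ∀ (i u v : V) (c : C), u ∈ N c → v ∈ N c → dG i v ≤ dG i u + 1)
    (H : Matrix C V (ZMod 2)) (hH : ∀ c v, H c v = if v ∈ N c then 1 else 0) :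
    ∃ (ι : Type) (b : Module.Basis ι (ZMod 2) (LinearMap.ker H.mulVecLin)),
      Nat.card ι = Fintype.card V - Fintype.card C ∧
      ∀ j : ι, ∃ i : V,
        (∀ v : V, ((b j : LinearMap.ker H.mulVecLin) : V → ZMod 2) v ≠ 0 → dG i v ≤ T) ∧
        hammingNorm ((b j : LinearMap.ker H.mulVecLin) : V → ZMod 2) ≤
          Finset.univ.sup (fun i' : V => (Finset.univ.filter (fun v : V => dG i' v ≤ T)).card) := by
  classical
  -- clause sets are antitone
  have hmono2 : ∀ s t : ℕ, s ≤ t → (J t).2 ⊆ (J s).2 := by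
    intro s t hst
    induction t with
    | zero => simp_all
    | succ n ih =>
      rcases Nat.lt_or_ge s (n+1) with h | h
      · exact fun c hc => ih (Nat.lt_succ_iff.mp h) (((hstep2 n c).1 hc).1)
      · have : s = n + 1 := le_antisymm hst h
        subst this; exact fun c hc => hc
  -- removal time of a clause
  have hex : ∀ c : C, ∃ t, c ∉ (J t).2 := fun c => ⟨T, by simp [hT]⟩
  set tc : C → ℕ := fun c => Nat.find (hex c) - 1 with htcdef
  have hfind_pos : ∀ c, 1 ≤ Nat.find (hex c) := by
    intro c
    rcases Nat.eq_zero_or_pos (Nat.find (hex c)) with h | h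
    · exfalso
      have := Nat.find_spec (hex c)
      rw [h, hJ0] at this
      exact this (Finset.mem_univ c)
    · exact h
  have htc1 : ∀ c, c ∈ (J (tc c)).2 := by
    intro c
    have hlt : tc c < Nat.find (hex c) := by
      have := hfind_pos c; simp only [htcdef]; omega
    exact not_not.mp (Nat.find_min (hex c) hlt)
  have htc2 : ∀ c, c ∉ (J (tc c + 1)).2 := by
    intro c
    have : tc c + 1 = Nat.find (hex c) := by
      have := hfind_pos c; simp only [htcdef]; omega
    rw [this]; exact Nat.find_spec (hex c)
  have htcT : ∀ c, tc c < T := by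
    intro c
    have h1 := hfind_pos c
    have h2 : Nat.find (hex c) ≤ T := Nat.find_le (by simp [hT])
    simp only [htcdef]; omega
  -- the matched variable
  have hμex : ∀ c : C, ∃ v, v ∈ (J (tc c)).1 ∧
      ((J (tc c)).2.filter (fun c' => v ∈ N c')).card ≤ 1 ∧ v ∈ N c := by
    intro c
    have h2 := htc2 c
    rw [hstep2] at h2
    have := not_and.mp h2 (htc1 c)
    rw [not_not] at this
    obtain ⟨v, hv1, hv2, hv3⟩ := this
    exact ⟨v, hv1, hv2, hv3⟩
  set μ : C → V := fun c => (hμex c).choose with hμdef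
  have hμ2 : ∀ c, (((J (tc c)).2.filter (fun c' => μ c ∈ N c')).card ≤ 1) :=
    fun c => (hμex c).choose_spec.2.1
  have hμ3 : ∀ c, μ c ∈ N c := fun c => (hμex c).choose_spec.2.2
  -- triangularity
  have hA : ∀ c c' : C, c' ≠ c → μ c' ∈ N c → tc c < tc c' := by
    intro c c' hne hmem
    by_contra h
    push_neg at h
    have hcmem : c ∈ (J (tc c')).2 := hmono2 _ _ h (htc1 c)
    have hsub : ({c, c'} : Finset C) ⊆ (J (tc c')).2.filter (fun d => μ c' ∈ N d) := by
      intro d hd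
      rcases Finset.mem_insert.mp hd with h | h
      · subst h; exact Finset.mem_filter.mpr ⟨hcmem, hmem⟩
      · rw [Finset.mem_singleton] at h; subst h
        exact Finset.mem_filter.mpr ⟨htc1 _, hμ3 _⟩
    have h2 : 2 ≤ ((J (tc c')).2.filter (fun d => μ c' ∈ N d)).card := by
      calc 2 = ({c, c'} : Finset C).card := (Finset.card_pair (Ne.symm hne)).symm
      _ ≤ _ := Finset.card_le_card hsub
    exact absurd (hμ2 c') (by omega)
  have hinj : Function.Injective μ := by
    intro c c' h
    by_contra hne
    rcases le_total (tc c) (tc c') with hle | hle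
    · exact absurd (hA c' c hne (show μ c ∈ N c' by rw [h]; exact hμ3 c')) (by omega)
    · exact absurd (hA c c' (Ne.symm hne) (show μ c' ∈ N c by rw [← h]; exact hμ3 c)) (by omega)
  -- matching map and rank
  set M : V → Option C := fun v => if h : ∃ c, μ c = v then some h.choose else none with hMdef
  have hM1 : ∀ c, M (μ c) = some c := by
    intro c
    have h : ∃ c', μ c' = μ c := ⟨c, rfl⟩
    simp only [hMdef, dif_pos h]
    exact congrArg some (hinj h.choose_spec)
  have hM3 : ∀ v c, M v = some c → μ c = v := by
    intro v c hvc
    by_cases h : ∃ c', μ c' = v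
    · simp only [hMdef, dif_pos h, Option.some.injEq] at hvc
      rw [← hvc]; exact h.choose_spec
    · simp [hMdef, dif_neg h] at hvc
  set rk : V → ℕ := fun v => (M v).elim 0 (fun c => T - tc c) with hrkdef
  have hrkT : ∀ v, rk v ≤ T := by
    intro v
    simp only [hrkdef]
    cases M v with
    | none => simp
    | some c => simpa using Nat.sub_le T (tc c)
  have hdec : ∀ c : C, ∀ w ∈ (N c).erase (μ c), rk w < rk (μ c) := by
    intro c w hw
    have hrkμ : rk (μ c) = T - tc c := by simp [hrkdef, hM1 c]
    have hwne : w ≠ μ c := Finset.ne_of_mem_erase hw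
    have hwN : w ∈ N c := Finset.mem_of_mem_erase hw
    cases hMw : M w with
    | none =>
      have : rk w = 0 := by simp [hrkdef, hMw]
      rw [this, hrkμ]
      have := htcT c; omega
    | some c' =>
      have hμc' : μ c' = w := hM3 w c' hMw
      have hne : c' ≠ c := by
        intro h; subst h; exact hwne hμc'.symm
      have := hA c c' hne (hμc' ▸ hwN)
      have h2 := htcT c'
      have : rk w = T - tc c' := by simp [hrkdef, hMw]
      omega
  -- the solution vectors
  set y : V → V → ZMod 2 := fun i => solveAux N M rk i with hydef
  have hyfree : ∀ i v, M v = none → y i v = if v = i then 1 else 0 := by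
    intro i v h
    simp only [hydef]
    rw [solveAux, h]
  have hymatch : ∀ i c, y i (μ c) = ∑ w ∈ (N c).erase (μ c), y i w := by
    intro i c
    simp only [hydef]
    rw [solveAux, hM1 c]
    exact Finset.sum_congr rfl (fun w hw => dif_pos (hdec c w hw))
  -- rows of H sum over N c
  have hrow : ∀ (x : V → ZMod 2) (c : C), H.mulVecLin x c = ∑ v ∈ N c, x v := by
    intro x c
    rw [Matrix.mulVecLin_apply, Matrix.mulVec]
    simp only [dotProduct, hH, ite_mul, one_mul, zero_mul]
    rw [Finset.sum_ite_mem, Finset.univ_inter]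
  -- kernel membership
  have hker : ∀ i, H.mulVecLin (y i) = 0 := by
    intro i
    funext c
    rw [hrow]
    rw [← Finset.add_sum_erase _ _ (hμ3 c), hymatch i c]
    simp [CharTwo.add_self_eq_zero]
  -- support bound
  have hsupp : ∀ (n : ℕ) (i v : V), rk v ≤ n → y i v ≠ 0 → dG i v ≤ rk v := by
    intro n
    induction n with
    | zero =>
      intro i v hv hy
      cases hMv : M v with
      | none =>
        rw [hyfree i v hMv] at hy
        have : v = i := by by_contra h; simp [h] at hy
        subst this; simp [hd0]
      | some c =>
        exfalso
        have : rk v = T - tc c := by simp [hrkdef, hMv]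
        have := htcT c
        omega
    | succ n ih =>
      intro i v hv hy
      cases hMv : M v with
      | none =>
        rw [hyfree i v hMv] at hy
        have : v = i := by by_contra h; simp [h] at hy
        subst this; simp [hd0]
      | some c =>
        have hμc : μ c = v := hM3 v c hMv
        rw [← hμc] at hy
        rw [hymatch i c] at hy
        have : ∃ w ∈ (N c).erase (μ c), y i w ≠ 0 := by
          by_contra h
          push_neg at h
          rw [Finset.sum_congr rfl h, Finset.sum_const_zero] at hy
          exact hy rfl
        obtain ⟨w, hw, hyw⟩ := this
        have hlt := hdec c w hw
        rw [hμc] at hlt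
        have hIH := ih i w (by omega) hyw
        have := hdstep i w v c (Finset.mem_of_mem_erase hw) (hμc ▸ hμ3 c)
        omega
  -- uniqueness: kernel vector vanishing on free coords is 0
  have huniq : ∀ z : V → ZMod 2, H.mulVecLin z = 0 → (∀ v, M v = none → z v = 0) →
      ∀ v, z v = 0 := by
    intro z hz hfree
    have key : ∀ (n : ℕ) (v : V), rk v ≤ n → z v = 0 := by
      intro n
      induction n with
      | zero =>
        intro v hv
        cases hMv : M v with
        | none => exact hfree v hMv
        | some c =>
          exfalso
          have : rk v = T - tc c := by simp [hrkdef, hMv]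
          have := htcT c
          omega
      | succ n ih =>
        intro v hv
        cases hMv : M v with
        | none => exact hfree v hMv
        | some c =>
          have hμc : μ c = v := hM3 v c hMv
          have hzc : ∑ u ∈ N c, z u = 0 := by rw [← hrow z c, hz]; rfl
          rw [← Finset.add_sum_erase _ _ (hμ3 c)] at hzc
          have : ∀ w ∈ (N c).erase (μ c), z w = 0 := by
            intro w hw
            have hlt := hdec c w hw
            rw [hμc] at hlt
            exact ih w (by omega)
          rw [Finset.sum_congr rfl this, Finset.sum_const_zero, add_zero] at hzc
          rw [← hμc]; exact hzc
    exact fun v => key (rk v) v le_rfl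
  -- index type: free variables
  have hb0mem : ∀ j : {v : V // M v = none}, y j.1 ∈ LinearMap.ker H.mulVecLin :=
    fun j => LinearMap.mem_ker.mpr (hker j.1)
  set b0 : {v : V // M v = none} → LinearMap.ker H.mulVecLin :=
    fun j => ⟨y j.1, hb0mem j⟩ with hb0def
  have heval : ∀ (j j' : {v : V // M v = none}), y j.1 j'.1 = if j' = j then 1 else 0 := by
    intro j j'
    rw [hyfree _ _ j'.2]
    by_cases h : j' = j
    · subst h; simp
    · rw [if_neg (fun hh => h (Subtype.ext hh)), if_neg h]
  have hsum_eval : ∀ (g : {v : V // M v = none} → ZMod 2) (j0 : {v : V // M v = none}),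
      (((∑ j, g j • b0 j : LinearMap.ker H.mulVecLin) : V → ZMod 2)) j0.1 = g j0 := by
    intro g j0
    have hc : ((∑ j, g j • b0 j : LinearMap.ker H.mulVecLin) : V → ZMod 2)
        = ∑ j, g j • y j.1 := by
      rw [Submodule.coe_sum]
      exact Finset.sum_congr rfl (fun i _ => rfl)
    rw [hc]
    rw [Finset.sum_apply]
    simp only [Pi.smul_apply, smul_eq_mul, heval, mul_ite, mul_one, mul_zero]
    simp
  have hli : LinearIndependent (ZMod 2) b0 := by
    rw [Fintype.linearIndependent_iff]
    intro g hg j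
    have h2 := hsum_eval g j
    rw [hg] at h2
    simpa using h2.symm
  have hspan : ∀ z : LinearMap.ker H.mulVecLin,
      z = ∑ j, ((z : V → ZMod 2) j.1) • b0 j := by
    intro z
    set s : LinearMap.ker H.mulVecLin := ∑ j, ((z : V → ZMod 2) j.1) • b0 j with hsdef
    have hw : ∀ u, ((z - s : LinearMap.ker H.mulVecLin) : V → ZMod 2) u = 0 := by
      apply huniq
      · exact LinearMap.mem_ker.mp (z - s).2
      · intro u hu
        have h1 := hsum_eval (fun j => (z : V → ZMod 2) j.1) ⟨u, hu⟩
        rw [← hsdef] at h1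
        push_cast
        rw [Pi.sub_apply, h1]
        simp
    have : (z - s : LinearMap.ker H.mulVecLin) = 0 := by
      apply Subtype.ext
      funext u
      simpa using hw u
    have := sub_eq_zero.mp this
    exact this
  have hsp : ⊤ ≤ Submodule.span (ZMod 2) (Set.range b0) := by
    intro z _
    rw [hspan z]
    exact Submodule.sum_mem _
      (fun j _ => Submodule.smul_mem _ _ (Submodule.subset_span ⟨j, rfl⟩))
  refine ⟨{v : V // M v = none}, Module.Basis.mk hli hsp, ?_, ?_⟩
  · -- cardinality
    have e : C ≃ {v : V // ¬ M v = none} := by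
      refine Equiv.ofBijective (fun c => ⟨μ c, by rw [hM1 c]; simp⟩) ⟨?_, ?_⟩
      · intro c c' hcc'
        exact hinj (congrArg Subtype.val hcc')
      · rintro ⟨v, hv⟩
        cases hMv : M v with
        | none => exact absurd hMv hv
        | some c => exact ⟨c, Subtype.ext (hM3 v c hMv)⟩
    have h1 : Fintype.card {v : V // ¬ M v = none} = Fintype.card C :=
      (Fintype.card_congr e).symm
    have h2 := Fintype.card_subtype_compl (p := fun v : V => M v = none)
    have h3 : Fintype.card {v : V // M v = none} ≤ Fintype.card V :=
      Fintype.card_subtype_le _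
    rw [Nat.card_eq_fintype_card]
    omega
  · intro j
    refine ⟨j.1, ?_, ?_⟩
    · intro v hv
      rw [Module.Basis.coe_mk] at hv
      exact le_trans (hsupp (rk v) j.1 v le_rfl hv) (hrkT v)
    · rw [Module.Basis.coe_mk]
      have hsub : Finset.univ.filter (fun v => (b0 j : V → ZMod 2) v ≠ 0)
          ⊆ Finset.univ.filter (fun v : V => dG j.1 v ≤ T) := by
        intro v hv
        simp only [Finset.mem_filter, Finset.mem_univ, true_and] at hv ⊢
        exact le_trans (hsupp (rk v) j.1 v le_rfl hv) (hrkT v)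
      calc hammingNorm ((b0 j : V → ZMod 2))
          = (Finset.univ.filter (fun v => (b0 j : V → ZMod 2) v ≠ 0)).card := rfl
        _ ≤ (Finset.univ.filter (fun v : V => dG j.1 v ≤ T)).card :=
            Finset.card_le_card hsub
        _ ≤ _ := Finset.le_sup (f := fun i' : V => (Finset.univ.filter (fun v : V => dG i' v ≤ T)).card) (Finset.mem_univ j.1)
end

section
/- Let H be the biadjacency matrix of a bipartite graph G and let G' be the 2-core of G with biadjacency matrix H'. Then the projection map π sending a solution x of Hx = 0 to its restriction to the core variables maps ker(H) onto ker(H'), and the fibers π^{-1}(x_core) (the 'clusters') all have the same cardinality, namely 2^{dim ker(H) - dim π(ker(H))}. -/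
lemma peel_ext {V C : Type} [Fintype V] [Fintype C] [DecidableEq V] [DecidableEq C]
    (N : C → Finset V) (A : Finset V) (B : Finset C)
    (hclosed : ∀ c ∈ B, N c ⊆ A)
    (hdeg : ∀ v ∈ A, 2 ≤ (B.filter (fun c => v ∈ N c)).card)
    (hmax : ∀ (A' : Finset V) (B' : Finset C), (∀ c ∈ B', N c ⊆ A') →
      (∀ v ∈ A', 2 ≤ (B'.filter (fun c => v ∈ N c)).card) → A' ⊆ A ∧ B' ⊆ B) :
    ∀ (n : ℕ) (A' : Finset V) (B' : Finset C), A'.card + B'.card ≤ n →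
      A ⊆ A' → B ⊆ B' → (∀ c ∈ B', N c ⊆ A') →
      ∀ x : V → ZMod 2, (∀ c ∈ B, ∑ v ∈ N c, x v = 0) →
      ∃ y : V → ZMod 2, (∀ c ∈ B', ∑ v ∈ N c, y v = 0) ∧ ∀ v ∈ A, y v = x v := by
  intro n
  induction n with
  | zero =>
    intro A' B' hcard hA hB hcl x hx
    have hB0 : B' = ∅ := Finset.card_eq_zero.mp (by omega)
    exact ⟨x, by simp [hB0], fun v _ => rfl⟩
  | succ n ih =>
    intro A' B' hcard hA hB hcl x hx
    by_cases hpeel : ∃ v ∈ A', (B'.filter (fun c => v ∈ N c)).card ≤ 1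
    · obtain ⟨v, hvA', hvdeg⟩ := hpeel
      have hvA : v ∉ A := by
        intro hvin
        have h2 : 2 ≤ (B.filter (fun c => v ∈ N c)).card := hdeg v hvin
        have hmono : (B.filter (fun c => v ∈ N c)) ⊆ (B'.filter (fun c => v ∈ N c)) :=
          Finset.filter_subset_filter _ hB
        have := Finset.card_le_card hmono
        omega
      have hAsub : A ⊆ A'.erase v := fun w hw =>
        Finset.mem_erase.mpr ⟨fun h => hvA (h ▸ hw), hA hw⟩
      have hcard' : (A'.erase v).card + 1 = A'.card := Finset.card_erase_add_one hvA'
      set F := B'.filter (fun c => v ∈ N c) with hF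
      rcases F.eq_empty_or_nonempty with hFe | hFn
      · -- no clause contains v
        have hFempty : ∀ d ∈ B', v ∉ N d := by
          intro d hd hvd
          have hdF : d ∈ F := Finset.mem_filter.mpr ⟨hd, hvd⟩
          rw [hFe] at hdF
          exact absurd hdF (Finset.notMem_empty d)
        have hcl' : ∀ d ∈ B', N d ⊆ A'.erase v := fun d hd w hw =>
          Finset.mem_erase.mpr ⟨fun h : w = v => hFempty d hd (by rw [← h]; exact hw),
            hcl d hd hw⟩
        obtain ⟨y, hy1, hy2⟩ := ih (A'.erase v) B' (by omega) hAsub hB hcl' x hx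
        exact ⟨y, hy1, hy2⟩
      · obtain ⟨c, hc⟩ := hFn
        have hcsub : F ⊆ {c} := by
          intro d hd
          have := Finset.card_le_one.mp hvdeg d hd c hc
          simp [this]
        have hcB' : c ∈ B' := (Finset.mem_filter.mp hc).1
        have hvNc : v ∈ N c := (Finset.mem_filter.mp hc).2
        have hcB : c ∉ B := fun hcB => hvA (hclosed c hcB hvNc)
        have hBsub : B ⊆ B'.erase c := fun d hd =>
          Finset.mem_erase.mpr ⟨fun h => hcB (h ▸ hd), hB hd⟩
        have hcl' : ∀ d ∈ B'.erase c, N d ⊆ A'.erase v := by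
          intro d hd w hw
          have hd' : d ∈ B' := Finset.mem_of_mem_erase hd
          have hvnd : v ∉ N d := by
            intro hvd
            have : d ∈ F := Finset.mem_filter.mpr ⟨hd', hvd⟩
            have : d = c := Finset.mem_singleton.mp (hcsub this)
            exact (Finset.mem_erase.mp hd).1 this
          exact Finset.mem_erase.mpr ⟨fun h => hvnd (h ▸ hw), hcl d hd' hw⟩
        obtain ⟨y, hy1, hy2⟩ := ih (A'.erase v) (B'.erase c)
          (by have := Finset.card_erase_le (s := B') (a := c); omega)
          hAsub hBsub hcl' x hx
        refine ⟨Function.update y v (y v + ∑ w ∈ N c, y w), ?_, ?_⟩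
        · intro d hd
          by_cases hdc : d = c
          · subst hdc
            rw [Finset.sum_update_of_mem hvNc]
            rw [Finset.sum_eq_add_sum_sdiff_singleton_of_mem hvNc y]
            ring_nf
            rw [show (2 : ZMod 2) = 0 by rfl]
            ring
          · have hd' : d ∈ B'.erase c := Finset.mem_erase.mpr ⟨hdc, hd⟩
            have hvnd : v ∉ N d := by
              intro hvd
              exact hdc (Finset.mem_singleton.mp (hcsub (Finset.mem_filter.mpr ⟨hd, hvd⟩)))
            rw [Finset.sum_congr rfl fun w hw => Function.update_of_ne
              (fun h : w = v => hvnd (by rw [← h]; exact hw)) _ y]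
            exact hy1 d hd'
        · intro w hw
          rw [Function.update_of_ne (fun h : w = v => hvA (by rw [← h]; exact hw)) _ y]
          exact hy2 w hw
    · push_neg at hpeel
      have := hmax A' B' hcl (fun v hv => hpeel v hv)
      have hBeq : B' ⊆ B := this.2
      exact ⟨x, fun c hc => hx c (hBeq hc), fun v _ => rfl⟩


theorem stmt17 {V C : Type} [Fintype V] [Fintype C] [DecidableEq V] [DecidableEq C]
    (N : C → Finset V) (A : Finset V) (B : Finset C)
    (hclosed : ∀ c ∈ B, N c ⊆ A)
    (hdeg : ∀ v ∈ A, 2 ≤ (B.filter (fun c => v ∈ N c)).card)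
    (hmax : ∀ (A' : Finset V) (B' : Finset C), (∀ c ∈ B', N c ⊆ A') →
      (∀ v ∈ A', 2 ≤ (B'.filter (fun c => v ∈ N c)).card) → A' ⊆ A ∧ B' ⊆ B)
    (H : Matrix C V (ZMod 2)) (hH : ∀ c v, H c v = if v ∈ N c then 1 else 0)
    (H' : Matrix {c // c ∈ B} {v // v ∈ A} (ZMod 2)) (hH' : ∀ c v, H' c v = H c.1 v.1)
    (π : (V → ZMod 2) →ₗ[ZMod 2] ({v // v ∈ A} → ZMod 2)) (hπ : ∀ x v, π x v = x v.1) :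
    Submodule.map π (LinearMap.ker H.mulVecLin) = LinearMap.ker H'.mulVecLin ∧
    ∀ xc : {v // v ∈ A} → ZMod 2, H'.mulVec xc = 0 →
      Nat.card {x : V → ZMod 2 | H.mulVec x = 0 ∧ π x = xc} =
        2 ^ (Module.finrank (ZMod 2) (LinearMap.ker H.mulVecLin) -
          Module.finrank (ZMod 2) (Submodule.map π (LinearMap.ker H.mulVecLin))) := by
  have hrow : ∀ (c : C) (x : V → ZMod 2), H.mulVec x c = ∑ v ∈ N c, x v := by
    intro c x
    simp only [Matrix.mulVec, dotProduct, hH, ite_mul, one_mul, zero_mul]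
    rw [Finset.sum_ite_mem, Finset.univ_inter]
  have hcomm : ∀ (x : V → ZMod 2) (c : {c // c ∈ B}),
      H'.mulVec (π x) c = H.mulVec x c.1 := by
    intro x c
    simp only [Matrix.mulVec, dotProduct, hH', hH, hπ, ite_mul, one_mul, zero_mul]
    rw [Finset.univ_eq_attach,
      Finset.sum_attach A (fun w => if w ∈ N c.1 then x w else 0),
      Finset.sum_ite_mem, Finset.inter_eq_right.mpr (hclosed c.1 c.2)]
    rw [Finset.sum_ite_mem, Finset.univ_inter]
  have part1 : Submodule.map π (LinearMap.ker H.mulVecLin) = LinearMap.ker H'.mulVecLin := by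
    apply le_antisymm
    · rintro x' ⟨x, hx, rfl⟩
      have hx0 : H.mulVec x = 0 := hx
      show H'.mulVecLin (π x) = 0
      rw [Matrix.mulVecLin_apply]
      funext c
      rw [hcomm x c, hx0]
      rfl
    · intro x' hx'
      rw [LinearMap.mem_ker, Matrix.mulVecLin_apply] at hx'
      set x₀ : V → ZMod 2 := fun v => if h : v ∈ A then x' ⟨v, h⟩ else 0 with hx₀def
      have hπx₀ : π x₀ = x' := by
        funext v
        rw [hπ, hx₀def]
        simp [v.2]
      have hx₀B : ∀ c ∈ B, ∑ v ∈ N c, x₀ v = 0 := by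
        intro c hc
        rw [← hrow, ← hcomm x₀ ⟨c, hc⟩, hπx₀, hx']
        rfl
      obtain ⟨y, hy1, hy2⟩ := peel_ext N A B hclosed hdeg hmax
        (Fintype.card V + Fintype.card C) Finset.univ Finset.univ
        (by simp) (Finset.subset_univ A) (Finset.subset_univ B)
        (fun c _ => Finset.subset_univ (N c)) x₀ hx₀B
      refine ⟨y, ?_, ?_⟩
      · show H.mulVecLin y = 0
        rw [Matrix.mulVecLin_apply]
        funext c
        rw [hrow, hy1 c (Finset.mem_univ c)]
        rfl
      · rw [← hπx₀]
        funext v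
        rw [hπ, hπ]
        exact hy2 v.1 v.2
  refine ⟨part1, ?_⟩
  intro xc hxc
  set K := LinearMap.ker H.mulVecLin with hK
  have hxcmem : xc ∈ Submodule.map π K := by
    rw [part1, LinearMap.mem_ker, Matrix.mulVecLin_apply]
    exact hxc
  obtain ⟨x₀, hx₀K, hπx₀⟩ := hxcmem
  set f := π.domRestrict K with hf
  have hmem : ∀ x : V → ZMod 2, H.mulVec x = 0 ↔ x ∈ K := by
    intro x
    rw [hK, LinearMap.mem_ker, Matrix.mulVecLin_apply]
  have e : {x : V → ZMod 2 | H.mulVec x = 0 ∧ π x = xc} ≃ LinearMap.ker f :=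
    { toFun := fun x => ⟨⟨x.1 - x₀, sub_mem ((hmem x.1).mp x.2.1) hx₀K⟩, by
        rw [LinearMap.mem_ker, hf, LinearMap.domRestrict_apply, map_sub, x.2.2, hπx₀,
          sub_self]⟩
      invFun := fun z => ⟨z.1.1 + x₀, by
        refine ⟨(hmem _).mpr (add_mem z.1.2 hx₀K), ?_⟩
        have hz : π z.1.1 = 0 := z.2
        rw [map_add, hz, hπx₀, zero_add]⟩
      left_inv := fun x => by
        ext v
        simp
      right_inv := fun z => by
        ext v
        simp }
  rw [Nat.card_congr e]
  haveI : Fintype (LinearMap.ker f) := Fintype.ofFinite _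
  rw [Nat.card_eq_fintype_card, Module.card_eq_pow_finrank (K := ZMod 2), ZMod.card 2]
  congr 1
  have hrank := LinearMap.finrank_range_add_finrank_ker f
  have hrange : LinearMap.range f = Submodule.map π K := by
    rw [hf]
    exact LinearMap.range_domRestrict K π
  rw [hrange] at hrank
  rw [← hrank]
  omega
end
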